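/- In a normal sequential effect algebra, if a² = a ∘ a = 0, then a = 0. -/
import Mathlib


universe u

/-- `EAle orth add a b` : the effect-algebra order `a ≤ b` iff `∃ c, a ⊕ c = b`. -/
def EAle {α : Type u} (orth : α → α → Prop) (add : α → α → α) (a b : α) : Prop :=
  ∃ c, orth a c ∧ add a c = b

/-- An effect algebra: partial sum `add` (defined when `orth` holds), zero, complement. -/
structure EffectAlgebra (α : Type u) where
  orth : α → α → Prop
  add : α → α → α
  zero : α
  compl : α → α
  orth_comm : ∀ a b, orth a b → orth b a
  add_comm' : ∀ a b, orth a b → add a b = add b a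
  orth_zero : ∀ a, orth a zero
  add_zero' : ∀ a, add a zero = a
  orth_assoc₁ : ∀ a b c, orth a b → orth (add a b) c → orth b c
  orth_assoc₂ : ∀ a b c, orth a b → orth (add a b) c → orth a (add b c)
  add_assoc' : ∀ a b c, orth a b → orth (add a b) c → add (add a b) c = add a (add b c)
  orth_compl : ∀ a, orth a (compl a)
  add_compl : ∀ a, add a (compl a) = compl zero
  compl_unique : ∀ a b, orth a b → add a b = compl zero → b = compl a
  orth_one : ∀ a, orth a (compl zero) → a = zero

namespace EffectAlgebra
variable {α : Type u}
/-- The effect-algebra order. -/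
def le (E : EffectAlgebra α) : α → α → Prop := EAle E.orth E.add
/-- The unit `1 := 0⊥`. -/
def one (E : EffectAlgebra α) : α := E.compl E.zero
end EffectAlgebra

/-- A sequential effect algebra: an effect algebra with a total product `seq`
satisfying S1–S5. -/
structure SEA (α : Type u) extends EffectAlgebra α where
  seq : α → α → α
  seq_orth : ∀ a b c, orth b c → orth (seq a b) (seq a c)                                -- S1
  seq_add : ∀ a b c, orth b c → seq a (add b c) = add (seq a b) (seq a c)                -- S1
  one_seq : ∀ a, seq (compl zero) a = a                                                  -- S2
  seq_zero_symm : ∀ a b, seq a b = zero → seq b a = zero                                 -- S3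
  comm_compl : ∀ a b, seq a b = seq b a → seq a (compl b) = seq (compl b) a              -- S4
  comm_assoc : ∀ a b c, seq a b = seq b a → seq a (seq b c) = seq (seq a b) c            -- S4
  comm_seq : ∀ a b c, seq c a = seq a c → seq c b = seq b c →
    seq c (seq a b) = seq (seq a b) c                                                    -- S5
  comm_add : ∀ a b c, seq c a = seq a c → seq c b = seq b c → orth a b →
    seq c (add a b) = seq (add a b) c                                                    -- S5

/-- A normal sequential effect algebra: a directed-complete SEA satisfying S6. -/
structure NormalSEA (α : Type u) extends SEA α where
  dSup : Set α → α
  dSup_upper : ∀ S : Set α, S.Nonempty → DirectedOn (EAle orth add) S →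
    ∀ s ∈ S, EAle orth add s (dSup S)
  dSup_least : ∀ S : Set α, S.Nonempty → DirectedOn (EAle orth add) S →
    ∀ b, (∀ s ∈ S, EAle orth add s b) → EAle orth add (dSup S) b
  seq_dSup : ∀ (a : α) (S : Set α), S.Nonempty → DirectedOn (EAle orth add) S →
    seq a (dSup S) = dSup ((fun s => seq a s) '' S)                                      -- S6
  comm_dSup : ∀ (a : α) (S : Set α), S.Nonempty → DirectedOn (EAle orth add) S →
    (∀ s ∈ S, seq a s = seq s a) → seq a (dSup S) = seq (dSup S) a                       -- S6

namespace NilpAux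

variable {α : Type u}

section EA
variable (E : EffectAlgebra α)

lemma zero_add (a : α) : E.add E.zero a = a := by
  rw [E.add_comm' _ _ (E.orth_comm _ _ (E.orth_zero a)), E.add_zero']

lemma pos_left {a b : α} (hab : E.orth a b) (h : E.add a b = E.zero) : a = E.zero := by
  have h1 : E.orth (E.add a b) (E.compl E.zero) := by
    rw [h]; exact E.orth_comm _ _ (E.orth_zero _)
  have hb : b = E.zero := E.orth_one b (E.orth_assoc₁ a b _ hab h1)
  calc a = E.add a b := by rw [hb, E.add_zero']
    _ = E.zero := h

lemma cancel {a b c : α} (hab : E.orth a b) (hac : E.orth a c)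
    (h : E.add a b = E.add a c) : b = c := by
  have h1 : E.orth (E.add a c) (E.compl (E.add a c)) := E.orth_compl _
  have h2 : E.add (E.add a c) (E.compl (E.add a c)) = E.compl E.zero := E.add_compl _
  have key : ∀ x, E.orth a x → E.add a x = E.add a c →
      x = E.compl (E.add a (E.compl (E.add a c))) := by
    intro x hx hxc
    have hxa : E.orth x a := E.orth_comm _ _ hx
    have hxae : E.orth (E.add x a) (E.compl (E.add a c)) := by
      rw [E.add_comm' x a hxa, hxc]; exact h1
    have h3 : E.add (E.add x a) (E.compl (E.add a c)) = E.compl E.zero := by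
      rw [E.add_comm' x a hxa, hxc]; exact h2
    have h4 : E.orth x (E.add a (E.compl (E.add a c))) := E.orth_assoc₂ x a _ hxa hxae
    have h5 : E.add x (E.add a (E.compl (E.add a c))) = E.compl E.zero := by
      rw [← E.add_assoc' x a _ hxa hxae]; exact h3
    exact E.compl_unique _ x (E.orth_comm _ _ h4)
      (by rw [E.add_comm' _ _ (E.orth_comm _ _ h4)]; exact h5)
  exact (key b hab h).trans (key c hac rfl).symm

lemma le_refl (a : α) : EAle E.orth E.add a a :=
  ⟨E.zero, E.orth_zero a, E.add_zero' a⟩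

lemma zero_le (a : α) : EAle E.orth E.add E.zero a :=
  ⟨a, E.orth_comm _ _ (E.orth_zero a), zero_add E a⟩

lemma le_trans {a b c : α} (h1 : EAle E.orth E.add a b) (h2 : EAle E.orth E.add b c) :
    EAle E.orth E.add a c := by
  obtain ⟨x, hx, hxb⟩ := h1
  obtain ⟨y, hy, hyc⟩ := h2
  subst hxb
  exact ⟨E.add x y, E.orth_assoc₂ a x y hx hy,
    by rw [← E.add_assoc' a x y hx hy]; exact hyc⟩

lemma le_antisymm {a b : α} (h1 : EAle E.orth E.add a b) (h2 : EAle E.orth E.add b a) :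
    a = b := by
  obtain ⟨c, hc, hcb⟩ := h1
  obtain ⟨d, hd, hda⟩ := h2
  subst hcb
  have ha : E.add a (E.add c d) = E.add a E.zero := by
    rw [E.add_zero', ← E.add_assoc' a c d hc hd]; exact hda
  have hcd : E.add c d = E.zero :=
    cancel E (E.orth_assoc₂ a c d hc hd) (E.orth_zero a) ha
  have hc0 : c = E.zero := pos_left E (E.orth_assoc₁ a c d hc hd) hcd
  rw [hc0, E.add_zero']

lemma le_cancel {a x t : α} (hax : E.orth a x) (hat : E.orth a t)
    (h : EAle E.orth E.add (E.add a x) (E.add a t)) : EAle E.orth E.add x t := by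
  obtain ⟨d, hd, hsum⟩ := h
  have hxd : E.orth x d := E.orth_assoc₁ a x d hax hd
  have haxd : E.orth a (E.add x d) := E.orth_assoc₂ a x d hax hd
  have : E.add a (E.add x d) = E.add a t := by
    rw [← E.add_assoc' a x d hax hd]; exact hsum
  exact ⟨d, hxd, cancel E haxd hat this⟩

end EA

section SEAsec
variable (E : SEA α)

lemma seq_one (a : α) : E.seq a (E.compl E.zero) = a := by
  have hc : E.seq a (E.compl a) = E.seq (E.compl a) a := E.comm_compl a a rfl
  have h2 : E.seq a (E.add a (E.compl a)) = E.seq (E.add a (E.compl a)) a :=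
    E.comm_add a (E.compl a) a rfl hc (E.orth_compl a)
  rw [E.add_compl] at h2
  rw [h2, E.one_seq]

lemma seq_zero (a : α) : E.seq a E.zero = E.zero := by
  have h0 : E.orth E.zero E.zero := E.orth_zero E.zero
  have h1 : E.seq a (E.add E.zero E.zero) = E.add (E.seq a E.zero) (E.seq a E.zero) :=
    E.seq_add a _ _ h0
  rw [E.add_zero'] at h1
  have horth : E.orth (E.seq a E.zero) (E.seq a E.zero) := E.seq_orth a _ _ h0
  have h2 : E.add (E.seq a E.zero) E.zero = E.add (E.seq a E.zero) (E.seq a E.zero) := by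
    rw [E.add_zero']; exact h1
  exact (cancel E.toEffectAlgebra (E.orth_zero _) horth h2).symm

lemma zero_seq (a : α) : E.seq E.zero a = E.zero :=
  E.seq_zero_symm a E.zero (seq_zero E a)

/-- `a ∘ b ≤ a`. -/
lemma seq_le_left (a b : α) : EAle E.orth E.add (E.seq a b) a := by
  refine ⟨E.seq a (E.compl b), E.seq_orth a b (E.compl b) (E.orth_compl b), ?_⟩
  rw [← E.seq_add a b (E.compl b) (E.orth_compl b), E.add_compl, seq_one]

lemma nilp_orth {a : α} (h : E.seq a a = E.zero) : E.orth a a := by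
  have ha : a = E.seq (E.compl a) a := by
    have h1 : a = E.seq a (E.compl a) := by
      conv_lhs => rw [← seq_one E a, ← E.add_compl a,
        E.seq_add a a (E.compl a) (E.orth_compl a), h, zero_add]
    exact h1.trans (E.comm_compl a a rfl)
  have hle : EAle E.orth E.add a (E.compl a) := by
    have hle0 := seq_le_left E (E.compl a) a
    rw [← ha] at hle0; exact hle0
  obtain ⟨c, hc, hsum⟩ := hle
  have hca : E.orth c a := E.orth_comm _ _ hc
  have h2 : E.orth (E.add c a) a := by
    rw [E.add_comm' c a hca, hsum]; exact E.orth_comm _ _ (E.orth_compl a)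
  exact E.orth_assoc₁ c a a hca h2

end SEAsec

/-- `n`-fold sum `n · a`. -/
def nmul (E : SEA α) (a : α) : ℕ → α
  | 0 => E.zero
  | n + 1 => E.add a (nmul E a n)

lemma nmul_prop (E : SEA α) {a : α} (h : E.seq a a = E.zero) : ∀ n,
    E.seq a (nmul E a n) = E.zero ∧ E.seq (nmul E a n) a = E.zero ∧
    E.orth a (nmul E a n) ∧ E.seq (nmul E a n) (nmul E a n) = E.zero := by
  intro n
  induction n with
  | zero => exact ⟨seq_zero E a, zero_seq E a, E.orth_zero a, seq_zero E E.zero⟩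
  | succ n ih =>
    obtain ⟨h1, h2, h3, h4⟩ := ih
    set b := nmul E a n with hb
    have hc : nmul E a (n + 1) = E.add a b := rfl
    rw [hc]
    have sac : E.seq a (E.add a b) = E.zero := by
      rw [E.seq_add a a b h3, h, h1, E.add_zero']
    have sca : E.seq (E.add a b) a = E.zero := E.seq_zero_symm a _ sac
    have sbc : E.seq b (E.add a b) = E.zero := by
      rw [E.seq_add b a b h3, h2, h4, E.add_zero']
    have scb : E.seq (E.add a b) b = E.zero := E.seq_zero_symm b _ sbc
    have scc : E.seq (E.add a b) (E.add a b) = E.zero := by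
      rw [E.seq_add _ a b h3, sca, scb, E.add_zero']
    have occ : E.orth (E.add a b) (E.add a b) := nilp_orth E scc
    have occ' : E.orth (E.add b a) (E.add a b) := by
      rw [E.add_comm' b a (E.orth_comm _ _ h3)]; exact occ
    have oac : E.orth a (E.add a b) := E.orth_assoc₁ b a _ (E.orth_comm _ _ h3) occ'
    exact ⟨sac, sca, oac, scc⟩

lemma nmul_mono (E : SEA α) {a : α} (h : E.seq a a = E.zero) {n k : ℕ} (hnk : n ≤ k) :
    EAle E.orth E.add (nmul E a n) (nmul E a k) := by
  induction hnk with
  | refl => exact le_refl E.toEffectAlgebra _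
  | @step m hm ih =>
    refine le_trans E.toEffectAlgebra ih ?_
    have h3 := (nmul_prop E h m).2.2.1
    exact ⟨a, E.orth_comm _ _ h3,
      by rw [E.add_comm' _ a (E.orth_comm _ _ h3)]; rfl⟩

end NilpAux

open NilpAux in
/-- In a normal SEA, `a ∘ a = 0` implies `a = 0`. -/
theorem nsea_no_nilpotents {α : Type u} (E : NormalSEA α) (a : α)
    (h : E.seq a a = E.zero) : a = E.zero := by
  set F := E.toSEA with hF
  set S : Set α := Set.range (nmul F a) with hS
  have hne : S.Nonempty := ⟨nmul F a 0, ⟨0, rfl⟩⟩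
  have hdir : DirectedOn (EAle E.orth E.add) S := by
    rintro x ⟨n, rfl⟩ y ⟨k, rfl⟩
    exact ⟨nmul F a (max n k), ⟨max n k, rfl⟩,
      nmul_mono F h (Nat.le_max_left n k), nmul_mono F h (Nat.le_max_right n k)⟩
  set s := E.dSup S with hs
  have ha1 : nmul F a 1 = a := by simp [nmul, F.add_zero']
  have ha_le : EAle E.orth E.add a s := by
    rw [← ha1]; exact E.dSup_upper S hne hdir _ ⟨1, rfl⟩
  obtain ⟨t, hat, habt⟩ := ha_le
  have ht_ub : ∀ x ∈ S, EAle E.orth E.add x t := by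
    rintro x ⟨n, rfl⟩
    have hsucc : EAle E.orth E.add (F.add a (nmul F a n)) (F.add a t) := by
      rw [habt]; exact E.dSup_upper S hne hdir _ ⟨n + 1, rfl⟩
    exact le_cancel F.toEffectAlgebra ((nmul_prop F h n).2.2.1) hat hsucc
  have hst : EAle E.orth E.add s t := E.dSup_least S hne hdir t ht_ub
  have hts : EAle E.orth E.add t s :=
    ⟨a, E.orth_comm _ _ hat, by rw [F.add_comm' t a (E.orth_comm _ _ hat)]; exact habt⟩
  have hteq : s = t := le_antisymm F.toEffectAlgebra hst hts
  rw [← hteq] at habt hat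
  have hfin : F.add s a = F.add s E.zero := by
    rw [F.add_zero', F.add_comm' s a (E.orth_comm _ _ hat)]; exact habt
  exact cancel F.toEffectAlgebra (E.orth_comm _ _ hat) (E.orth_zero s) hfin
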